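/- Let f be a smooth real-valued function on S¹ with zero mean. Then −∂₁f·∂₁³f − [Λ,f](Λ∂₁²f) = Λ(f·Λ³f) − ∂₁(f·∂₁³f) = ∂₁([H,f]Λ³f) pointwise on S¹. -/

import Mathlib

open Complex Filter MeasureTheory

noncomputable section

instance : Fact (0 < 2 * Real.pi) := ⟨by positivity⟩

/-- Hilbert transform on the circle `S¹ = ℝ/2πℤ`: Fourier multiplier `-i·sgn k`. -/
def Hop (f : AddCircle (2 * Real.pi) → ℂ) : AddCircle (2 * Real.pi) → ℂ :=
  fun x => ∑' k : ℤ, (-Complex.I) * (k.sign : ℂ) * fourierCoeff f k * fourier k x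

/-- `Λⁿ`: Fourier multiplier `|k|ⁿ`. -/
def Lamn (n : ℕ) (f : AddCircle (2 * Real.pi) → ℂ) : AddCircle (2 * Real.pi) → ℂ :=
  fun x => ∑' k : ℤ, ((|k| : ℤ) : ℂ) ^ n * fourierCoeff f k * fourier k x

/-- `∂₁ⁿ`: Fourier multiplier `(ik)ⁿ` (spatial derivative of smooth periodic functions). -/
def Dn (n : ℕ) (f : AddCircle (2 * Real.pi) → ℂ) : AddCircle (2 * Real.pi) → ℂ :=
  fun x => ∑' k : ℤ, (Complex.I * (k : ℂ)) ^ n * fourierCoeff f k * fourier k x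

/-- A smooth (rapidly decaying Fourier coefficients) real-valued zero-mean function on `S¹`,
given by the sum of its Fourier series. -/
def IsNice (f : AddCircle (2 * Real.pi) → ℂ) : Prop :=
  (∀ n : ℕ, Summable fun k : ℤ => ((|k| : ℤ) : ℝ) ^ n * ‖fourierCoeff f k‖) ∧
  (∀ x, (f x).im = 0) ∧ fourierCoeff f 0 = 0 ∧
  (∀ x, f x = ∑' k : ℤ, fourierCoeff f k * fourier k x)

/- ### Auxiliary general lemmas -/

section Aux

variable {T : ℝ} [hT : Fact (0 < T)]

theorem my_integral_fourier (m : ℤ) :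
    ∫ t : AddCircle T, fourier m t ∂AddCircle.haarAddCircle = if m = 0 then 1 else 0 := by
  split_ifs with h
  · subst h
    simp only [fourier_zero]
    simp [measure_univ]
  · exact integral_eq_zero_of_add_right_eq_neg (μ := AddCircle.haarAddCircle)
      (fourier_add_half_inv_index h hT.elim)

theorem fourierCoeff_tsum (c : ℤ → ℂ) (hc : Summable fun k => ‖c k‖) (n : ℤ) :
    fourierCoeff (fun x : AddCircle T => ∑' k, c k * fourier k x) n = c n := by
  have hmeas : ∀ k : ℤ, AEStronglyMeasurable
      (fun t : AddCircle T => fourier (-n) t • (c k * fourier k t))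
        AddCircle.haarAddCircle := by
    intro k
    exact (((map_continuous (fourier (-n))).mul
      ((continuous_const.mul (map_continuous (fourier k))))).aestronglyMeasurable)
  have hnorm : ∀ (k : ℤ) (t : AddCircle T), ‖fourier (-n) t • (c k * fourier k t)‖ = ‖c k‖ := by
    intro k t
    simp [norm_smul, Circle.norm_coe]
  have hfin : ∑' k : ℤ, ∫⁻ t : AddCircle T,
      ‖fourier (-n) t • (c k * fourier k t)‖₊ ∂AddCircle.haarAddCircle ≠ ⊤ := by
    have : ∀ k : ℤ, ∫⁻ t : AddCircle T,
        ‖fourier (-n) t • (c k * fourier k t)‖₊ ∂AddCircle.haarAddCircle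
        = (‖c k‖₊ : ENNReal) := by
      intro k
      have : (fun t : AddCircle T => (‖fourier (-n) t • (c k * fourier k t)‖₊ : ENNReal))
          = fun _ => (‖c k‖₊ : ENNReal) := by
        funext t
        congr 1
        ext
        exact hnorm k t
      rw [this, lintegral_const, measure_univ, mul_one]
    rw [tsum_congr this]
    exact ENNReal.tsum_coe_ne_top_iff_summable.2
      (NNReal.summable_coe.1 (by simpa only [coe_nnnorm] using hc))
  rw [fourierCoeff]
  calc ∫ t : AddCircle T, fourier (-n) t • ∑' k, c k * fourier k t ∂AddCircle.haarAddCircle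
      = ∫ t : AddCircle T, ∑' k, fourier (-n) t • (c k * fourier k t)
          ∂AddCircle.haarAddCircle := by
        congr 1; funext t
        simp only [smul_eq_mul]
        rw [← tsum_mul_left]
    _ = ∑' k, ∫ t : AddCircle T, fourier (-n) t • (c k * fourier k t)
          ∂AddCircle.haarAddCircle := integral_tsum hmeas hfin
    _ = c n := by
        have heval : ∀ k : ℤ, ∫ t : AddCircle T,
            fourier (-n) t • (c k * fourier k t) ∂AddCircle.haarAddCircle
            = c k * ∫ t : AddCircle T, fourier (-n + k) t ∂AddCircle.haarAddCircle := by
          intro k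
          rw [← integral_const_mul]
          congr 1; funext t
          rw [fourier_add]; simp [smul_eq_mul]; ring
        rw [tsum_congr heval]
        have : ∀ k : ℤ, c k * ∫ t : AddCircle T, fourier (-n + k) t ∂AddCircle.haarAddCircle
            = if k = n then c n else 0 := by
          intro k
          rw [my_integral_fourier]
          split_ifs with h1 h2 h2 <;> simp_all <;> omega
        rw [tsum_congr this]
        exact (tsum_eq_single n (fun k hk => by simp [hk])).trans (by simp)

def regIdx : ℤ × ℤ ≃ ℤ × ℤ where
  toFun q := (q.2, q.1 - q.2)
  invFun p := (p.1 + p.2, p.1)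
  left_inv q := by simp
  right_inv p := by simp

theorem norm_single (c : ℤ → ℂ) (x : AddCircle T) (k : ℤ) : ‖c k * fourier k x‖ = ‖c k‖ := by
  simp [Circle.norm_coe]

theorem summable_single {c : ℤ → ℂ} (hc : Summable fun k => ‖c k‖) (x : AddCircle T) :
    Summable fun k => c k * fourier k x :=
  Summable.of_norm (by simpa only [norm_single] using hc)

theorem norm_double (G : ℤ → ℤ → ℂ) (x : AddCircle T) (p : ℤ × ℤ) :
    ‖G p.1 p.2 * fourier (p.1 + p.2) x‖ = ‖G p.1 p.2‖ := by simp [Circle.norm_coe]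

theorem summable_double {G : ℤ → ℤ → ℂ} (hG : Summable fun p : ℤ × ℤ => ‖G p.1 p.2‖)
    (x : AddCircle T) : Summable fun p : ℤ × ℤ => G p.1 p.2 * fourier (p.1 + p.2) x :=
  Summable.of_norm (by simpa only [norm_double] using hG)

theorem conv_summable {G : ℤ → ℤ → ℂ} (hG : Summable fun p : ℤ × ℤ => ‖G p.1 p.2‖) :
    Summable fun k : ℤ => ‖∑' j : ℤ, G j (k - j)‖ := by
  have hre : Summable fun q : ℤ × ℤ => ‖G q.2 (q.1 - q.2)‖ := by
    have := (regIdx.summable_iff (f := fun p : ℤ × ℤ => ‖G p.1 p.2‖)).2 hG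
    exact this
  have hfib : Summable fun k : ℤ => ∑' j : ℤ, ‖G j (k - j)‖ :=
    (hre.hasSum.prod_fiberwise fun k => (hre.prod_factor k).hasSum).summable
  refine Summable.of_nonneg_of_le (fun k => norm_nonneg _) (fun k => ?_) hfib
  exact norm_tsum_le_tsum_norm (hre.prod_factor k)

theorem regroup {G : ℤ → ℤ → ℂ} (hG : Summable fun p : ℤ × ℤ => ‖G p.1 p.2‖) (x : AddCircle T) :
    ∑' p : ℤ × ℤ, G p.1 p.2 * fourier (p.1 + p.2) x
      = ∑' k : ℤ, (∑' j : ℤ, G j (k - j)) * fourier k x := by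
  have hsum : Summable fun p : ℤ × ℤ => G p.1 p.2 * fourier (p.1 + p.2) x := summable_double hG x
  rw [← regIdx.tsum_eq (fun p : ℤ × ℤ => G p.1 p.2 * fourier (p.1 + p.2) x)]
  have hsum' : Summable fun q : ℤ × ℤ => G q.2 (q.1 - q.2) * fourier (q.2 + (q.1 - q.2)) x := by
    have := (regIdx.summable_iff
      (f := fun p : ℤ × ℤ => G p.1 p.2 * fourier (p.1 + p.2) x)).2 hsum
    exact this
  calc ∑' q : ℤ × ℤ, G q.2 (q.1 - q.2) * fourier (q.2 + (q.1 - q.2)) x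
      = ∑' k : ℤ, ∑' j : ℤ, G j (k - j) * fourier (j + (k - j)) x := Summable.tsum_prod' hsum'
        (fun k => hsum'.prod_factor k)
    _ = ∑' k : ℤ, (∑' j : ℤ, G j (k - j)) * fourier k x := by
        refine tsum_congr fun k => ?_
        rw [← tsum_mul_right]
        exact tsum_congr fun j => by rw [show j + (k - j) = k by omega]

theorem coeff_double {G : ℤ → ℤ → ℂ} (hG : Summable fun p : ℤ × ℤ => ‖G p.1 p.2‖) (n : ℤ) :
    fourierCoeff (fun x : AddCircle T => ∑' p : ℤ × ℤ, G p.1 p.2 * fourier (p.1 + p.2) x) n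
      = ∑' j : ℤ, G j (n - j) := by
  rw [show (fun x : AddCircle T => ∑' p : ℤ × ℤ, G p.1 p.2 * fourier (p.1 + p.2) x)
      = fun x => ∑' k : ℤ, (∑' j : ℤ, G j (k - j)) * fourier k x from funext (regroup hG)]
  exact fourierCoeff_tsum _ (conv_summable hG) n

theorem apply_single (m : ℤ → ℂ) {c : ℤ → ℂ} (hc : Summable fun k => ‖c k‖) (x : AddCircle T) :
    ∑' k : ℤ, m k * fourierCoeff (fun y : AddCircle T => ∑' j : ℤ, c j * fourier j y) k
        * fourier k x
      = ∑' k : ℤ, (m k * c k) * fourier k x :=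
  tsum_congr fun k => by rw [fourierCoeff_tsum c hc]

theorem apply_double (m : ℤ → ℂ) {G : ℤ → ℤ → ℂ} (hG : Summable fun p : ℤ × ℤ => ‖G p.1 p.2‖)
    (hmG : Summable fun p : ℤ × ℤ => ‖m (p.1 + p.2) * G p.1 p.2‖) (x : AddCircle T) :
    ∑' k : ℤ, m k * fourierCoeff
        (fun y : AddCircle T => ∑' p : ℤ × ℤ, G p.1 p.2 * fourier (p.1 + p.2) y) k * fourier k x
      = ∑' p : ℤ × ℤ, (m (p.1 + p.2) * G p.1 p.2) * fourier (p.1 + p.2) x := by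
  rw [regroup (G := fun j l => m (j + l) * G j l) hmG x]
  refine tsum_congr fun k => ?_
  rw [coeff_double hG k]
  congr 1
  rw [← tsum_mul_left]
  exact tsum_congr fun j => by rw [show j + (k - j) = k by omega]

theorem prod_tsum {c d : ℤ → ℂ} (hc : Summable fun k => ‖c k‖) (hd : Summable fun k => ‖d k‖)
    (x : AddCircle T) :
    (∑' k : ℤ, c k * fourier k x) * (∑' k : ℤ, d k * fourier k x)
      = ∑' p : ℤ × ℤ, (c p.1 * d p.2) * fourier (p.1 + p.2) x := by
  rw [tsum_mul_tsum_of_summable_norm (by simpa only [norm_single] using hc)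
    (by simpa only [norm_single] using hd)]
  exact tsum_congr fun p => by rw [fourier_add]; ring

end Aux

/- ### Real arithmetic bounds -/

theorem key_bd (j l : ℤ) (r p q : ℕ) (hr : r ≤ 4) (hp : p ≤ 4) (hq : q ≤ 4) :
    |((j + l : ℤ):ℝ)| ^ r * |(j:ℝ)| ^ p * |(l:ℝ)| ^ q
      ≤ (1 + |(j:ℝ)|) ^ 8 * (1 + |(l:ℝ)|) ^ 8 := by
  push_cast
  have hx : (0:ℝ) ≤ |(j:ℝ)| := abs_nonneg _
  have hy : (0:ℝ) ≤ |(l:ℝ)| := abs_nonneg _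
  have h1 : |(j:ℝ) + (l:ℝ)| ≤ (1 + |(j:ℝ)|) * (1 + |(l:ℝ)|) :=
    le_trans (abs_add_le _ _) (by nlinarith)
  have h2 : |(j:ℝ) + (l:ℝ)| ^ r ≤ ((1 + |(j:ℝ)|) * (1 + |(l:ℝ)|)) ^ 4 :=
    le_trans (pow_le_pow_left₀ (abs_nonneg _) h1 r) (pow_le_pow_right₀ (by nlinarith) hr)
  have h3 : |(j:ℝ)| ^ p ≤ (1 + |(j:ℝ)|) ^ 4 :=
    le_trans (pow_le_pow_left₀ hx (by linarith) p) (pow_le_pow_right₀ (by linarith) hp)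
  have h4 : |(l:ℝ)| ^ q ≤ (1 + |(l:ℝ)|) ^ 4 :=
    le_trans (pow_le_pow_left₀ hy (by linarith) q) (pow_le_pow_right₀ (by linarith) hq)
  calc |(j:ℝ) + (l:ℝ)| ^ r * |(j:ℝ)| ^ p * |(l:ℝ)| ^ q
      ≤ ((1 + |(j:ℝ)|) * (1 + |(l:ℝ)|)) ^ 4 * (1 + |(j:ℝ)|) ^ 4 * (1 + |(l:ℝ)|) ^ 4 := by
        have ha := mul_le_mul h2 h3 (pow_nonneg hx p) (by positivity)
        exact mul_le_mul ha h4 (pow_nonneg hy q) (by positivity)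
    _ = (1 + |(j:ℝ)|) ^ 8 * (1 + |(l:ℝ)|) ^ 8 := by ring

theorem key_bd2 (j l : ℤ) (r : ℕ) (hr : r ≤ 4) :
    |((j + l : ℤ):ℝ)| ^ r * (2 * |(l:ℝ)| ^ 3)
      ≤ (1 + |(j:ℝ)|) ^ 8 * (1 + |(l:ℝ)|) ^ 8 := by
  push_cast
  have hx : (0:ℝ) ≤ |(j:ℝ)| := abs_nonneg _
  have hy : (0:ℝ) ≤ |(l:ℝ)| := abs_nonneg _
  have h1 : |(j:ℝ) + (l:ℝ)| ≤ (1 + |(j:ℝ)|) * (1 + |(l:ℝ)|) :=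
    le_trans (abs_add_le _ _) (by nlinarith)
  have h2 : |(j:ℝ) + (l:ℝ)| ^ r ≤ ((1 + |(j:ℝ)|) * (1 + |(l:ℝ)|)) ^ 4 :=
    le_trans (pow_le_pow_left₀ (abs_nonneg _) h1 r) (pow_le_pow_right₀ (by nlinarith) hr)
  have h4 : 2 * |(l:ℝ)| ^ 3 ≤ (1 + |(l:ℝ)|) ^ 4 := by
    nlinarith [pow_nonneg hy 2, pow_nonneg hy 3, pow_nonneg hy 4]
  calc |(j:ℝ) + (l:ℝ)| ^ r * (2 * |(l:ℝ)| ^ 3)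
      ≤ ((1 + |(j:ℝ)|) * (1 + |(l:ℝ)|)) ^ 4 * (1 + |(l:ℝ)|) ^ 4 :=
        mul_le_mul h2 h4 (by positivity) (by positivity)
    _ = (1 + |(j:ℝ)|) ^ 4 * (1 + |(l:ℝ)|) ^ 8 := by ring
    _ ≤ (1 + |(j:ℝ)|) ^ 8 * (1 + |(l:ℝ)|) ^ 8 :=
        mul_le_mul_of_nonneg_right
          (pow_le_pow_right₀ (by linarith) (by norm_num)) (by positivity)

theorem abs_sign_cast_le_one (k : ℤ) : |((k.sign : ℤ) : ℝ)| ≤ 1 := by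
  rcases lt_trichotomy k 0 with h | h | h
  · simp [Int.sign_eq_neg_one_of_neg h]
  · simp [h]
  · simp [Int.sign_eq_one_of_pos h]

theorem sign_sq_abs (k : ℤ) : k.sign * k.sign * |k| = |k| := by
  rw [mul_assoc, Int.sign_mul_abs]
  rcases lt_trichotomy k 0 with h | h | h
  · simp [Int.sign_eq_neg_one_of_neg h, abs_of_neg h]
  · simp [h]
  · simp [Int.sign_eq_one_of_pos h, abs_of_pos h]

/- ### Multiplier symbols -/

abbrev mL (n : ℕ) : ℤ → ℂ := fun k => ((|k| : ℤ) : ℂ) ^ n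
abbrev mD (n : ℕ) : ℤ → ℂ := fun k => (Complex.I * (k : ℂ)) ^ n
abbrev mH : ℤ → ℂ := fun k => (-Complex.I) * (k.sign : ℂ)

/- ### The pointwise scalar identities -/

theorem scalar1 (a : ℤ → ℂ) (j l : ℤ) :
    -((mD 1 j * a j) * (mD 3 l * a l))
      - (mL 1 (j + l) * (a j * (mL 1 l * (mD 2 l * a l)))
          - a j * (mL 1 l * (mL 1 l * (mD 2 l * a l))))
    = mL 1 (j + l) * (a j * (mL 3 l * a l)) - mD 1 (j + l) * (a j * (mD 3 l * a l)) := by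
  have hMl2 : ((|l| : ℤ) : ℂ) ^ 2 = ((l : ℤ) : ℂ) ^ 2 := by
    exact_mod_cast congrArg (fun z : ℤ => (z : ℂ)) (sq_abs l)
  simp only [mL, mD]
  push_cast
  push_cast at hMl2
  set A := a j; set B := a l; set J := (j:ℂ); set L := (l:ℂ)
  set M := ((|j + l| : ℤ) : ℂ); set Ml := ((|l| : ℤ) : ℂ)
  linear_combination (A * B * (-M * Ml * L ^ 2 + L ^ 2 * Ml ^ 2 - L ^ 4 + L ^ 4 * I ^ 2))
      * Complex.I_sq
    + (A * B * (-L ^ 2 - M * Ml)) * hMl2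

theorem scalar2 (a : ℤ → ℂ) (j l : ℤ) :
    mL 1 (j + l) * (a j * (mL 3 l * a l)) - mD 1 (j + l) * (a j * (mD 3 l * a l))
    = mD 1 (j + l) * (mH (j + l) * (a j * (mL 3 l * a l))
        - a j * (mH l * (mL 3 l * a l))) := by
  have hMl2 : ((|l| : ℤ) : ℂ) ^ 2 = ((l : ℤ) : ℂ) ^ 2 := by
    exact_mod_cast congrArg (fun z : ℤ => (z : ℂ)) (sq_abs l)
  have hsM : (((j + l).sign : ℤ) : ℂ) * ((|j + l| : ℤ) : ℂ) = ((j + l : ℤ) : ℂ) := by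
    exact_mod_cast Int.sign_mul_abs (j + l)
  have hs1 : (((j + l).sign : ℤ) : ℂ) * (((j + l).sign : ℤ) : ℂ) * ((|j + l| : ℤ) : ℂ)
      = ((|j + l| : ℤ) : ℂ) := by
    exact_mod_cast congrArg (fun z : ℤ => (z : ℂ)) (sign_sq_abs (j + l))
  have hsl : ((l.sign : ℤ) : ℂ) * ((|l| : ℤ) : ℂ) = ((l : ℤ) : ℂ) := by
    exact_mod_cast Int.sign_mul_abs l
  simp only [mL, mD, mH]
  push_cast at hMl2 hsM hs1 hsl ⊢
  set A := a j; set B := a l; set J := (j:ℂ); set L := (l:ℂ)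
  set M := ((|j + l| : ℤ) : ℂ); set Ml := ((|l| : ℤ) : ℂ)
  set s1 := (((j + l).sign : ℤ) : ℂ); set s2 := ((l.sign : ℤ) : ℂ)
  linear_combination (A * B * (-(I ^ 2 - 1) * (J + L) * L ^ 3 + (J + L) * (s1 - s2) * Ml ^ 3))
      * Complex.I_sq
    + (A * B * Ml ^ 3 * s1) * hsM + (-(A * B * Ml ^ 3)) * hs1
    + (A * B * (J + L) * Ml ^ 2) * hsl + (A * B * (J + L) * L) * hMl2

set_option maxHeartbeats 1000000 in
/-- Grouping of the `O(β)` (surface-tension) nonlinear terms: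
`−∂₁f·∂₁³f − [Λ,f](Λ∂₁²f) = Λ(f·Λ³f) − ∂₁(f·∂₁³f) = ∂₁([H,f]Λ³f)` pointwise. -/
theorem beta_grouping (f : AddCircle (2 * Real.pi) → ℂ) (hf : IsNice f) :
    ∀ x, (-(Dn 1 f x * Dn 3 f x)
          - (Lamn 1 (fun y => f y * Lamn 1 (Dn 2 f) y) x - f x * Lamn 1 (Lamn 1 (Dn 2 f)) x)
        = Lamn 1 (fun y => f y * Lamn 3 f y) x - Dn 1 (fun y => f y * Dn 3 f y) x)
      ∧ (Lamn 1 (fun y => f y * Lamn 3 f y) x - Dn 1 (fun y => f y * Dn 3 f y) x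
        = Dn 1 (fun y => Hop (fun z => f z * Lamn 3 f z) y - f y * Hop (Lamn 3 f) y) x) := by
  obtain ⟨hsm, -, -, hrep⟩ := hf
  set a : ℤ → ℂ := fourierCoeff f with ha
  -- basic growth bound
  have bd1 : ∀ (k : ℤ) (m : ℕ), m ≤ 8 → |(k:ℝ)| ^ m ≤ (1 + |(k:ℝ)|) ^ 8 := by
    intro k m hm
    exact le_trans (pow_le_pow_left₀ (abs_nonneg _) (by linarith [abs_nonneg ((k:ℝ))]) m)
      (pow_le_pow_right₀ (by linarith [abs_nonneg ((k:ℝ))]) hm)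
  -- summability infrastructure
  have habs : ∀ n : ℕ, Summable fun k : ℤ => |(k:ℝ)| ^ n * ‖a k‖ := by
    intro n
    have := hsm n
    simpa [Int.cast_abs] using this
  have hw : Summable fun k : ℤ => (1 + |(k:ℝ)|) ^ 8 * ‖a k‖ := by
    have hrw : ∀ k : ℤ, (1 + |(k:ℝ)|) ^ 8 * ‖a k‖
        = ∑ i ∈ Finset.range 9, (Nat.choose 8 i : ℝ) * (|(k:ℝ)| ^ i * ‖a k‖) := by
      intro k
      rw [add_comm (1:ℝ), add_pow, Finset.sum_mul]
      exact Finset.sum_congr rfl fun i _ => by ring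
    exact Summable.congr (summable_sum fun i _ => ((habs i).mul_left _)) fun k => (hrw k).symm
  have hW : Summable fun p : ℤ × ℤ =>
      ((1 + |(p.1:ℝ)|) ^ 8 * ‖a p.1‖) * ((1 + |(p.2:ℝ)|) ^ 8 * ‖a p.2‖) :=
    hw.mul_of_nonneg hw (fun k => by positivity) (fun k => by positivity)
  have master2 : ∀ σ : ℤ → ℤ → ℂ,
      (∀ j l, ‖σ j l‖ ≤ ((1 + |(j:ℝ)|) ^ 8 * ‖a j‖) * ((1 + |(l:ℝ)|) ^ 8 * ‖a l‖)) →
      Summable fun p : ℤ × ℤ => ‖σ p.1 p.2‖ := fun σ h =>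
    Summable.of_nonneg_of_le (fun p => norm_nonneg _) (fun p => h p.1 p.2) hW
  have master1 : ∀ c : ℤ → ℂ, (∀ k, ‖c k‖ ≤ (1 + |(k:ℝ)|) ^ 8 * ‖a k‖) →
      Summable fun k => ‖c k‖ := fun c h =>
    Summable.of_nonneg_of_le (fun k => norm_nonneg _) h hw
  -- single-multiplier coefficient summabilities
  have hs0 : Summable fun k : ℤ => ‖a k‖ := by
    refine master1 _ fun k => ?_
    have h1 := bd1 k 0 (by norm_num)
    rw [pow_zero] at h1
    exact le_mul_of_one_le_left (norm_nonneg _) h1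
  have hsD1 : Summable fun k : ℤ => ‖mD 1 k * a k‖ := by
    refine master1 _ fun k => ?_
    refine le_trans (le_of_eq ?_)
      (mul_le_mul_of_nonneg_right (bd1 k 1 (by norm_num)) (norm_nonneg _))
    simp only [mD, norm_mul, norm_pow, Complex.norm_I, Complex.norm_intCast,
      one_mul, pow_one]
  have hsD3 : Summable fun k : ℤ => ‖mD 3 k * a k‖ := by
    refine master1 _ fun k => ?_
    refine le_trans (le_of_eq ?_)
      (mul_le_mul_of_nonneg_right (bd1 k 3 (by norm_num)) (norm_nonneg _))
    simp only [mD, norm_mul, norm_pow, Complex.norm_I, Complex.norm_intCast,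
      one_mul]
  have hsD2i : Summable fun k : ℤ => ‖mD 2 k * a k‖ := by
    refine master1 _ fun k => ?_
    refine le_trans (le_of_eq ?_)
      (mul_le_mul_of_nonneg_right (bd1 k 2 (by norm_num)) (norm_nonneg _))
    simp only [mD, norm_mul, norm_pow, Complex.norm_I, Complex.norm_intCast,
      one_mul]
  have hsL1D2 : Summable fun k : ℤ => ‖mL 1 k * (mD 2 k * a k)‖ := by
    refine master1 _ fun k => ?_
    refine le_trans (le_of_eq ?_)
      (mul_le_mul_of_nonneg_right (bd1 k 3 (by norm_num)) (norm_nonneg _))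
    simp only [mL, mD, norm_mul, norm_pow, Complex.norm_I,
      Complex.norm_intCast, Int.cast_abs, _root_.abs_abs, one_mul, pow_one]
    ring
  have hsL1L1D2 : Summable fun k : ℤ => ‖mL 1 k * (mL 1 k * (mD 2 k * a k))‖ := by
    refine master1 _ fun k => ?_
    refine le_trans (le_of_eq ?_)
      (mul_le_mul_of_nonneg_right (bd1 k 4 (by norm_num)) (norm_nonneg _))
    simp only [mL, mD, norm_mul, norm_pow, Complex.norm_I,
      Complex.norm_intCast, Int.cast_abs, _root_.abs_abs, one_mul, pow_one]
    ring
  have hsL3 : Summable fun k : ℤ => ‖mL 3 k * a k‖ := by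
    refine master1 _ fun k => ?_
    refine le_trans (le_of_eq ?_)
      (mul_le_mul_of_nonneg_right (bd1 k 3 (by norm_num)) (norm_nonneg _))
    simp only [mL, norm_mul, norm_pow, Complex.norm_intCast, Int.cast_abs,
      _root_.abs_abs]
  have hsHL3 : Summable fun k : ℤ => ‖mH k * (mL 3 k * a k)‖ := by
    refine master1 _ fun k => ?_
    have e1 : ‖mH k * (mL 3 k * a k)‖ = |((k.sign : ℤ) : ℝ)| * (|(k:ℝ)| ^ 3 * ‖a k‖) := by
      simp only [mH, mL, neg_mul, norm_neg, norm_mul, norm_pow, 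
        Complex.norm_I, Complex.norm_intCast, Int.cast_abs, _root_.abs_abs, one_mul]
    rw [e1]
    refine le_trans (mul_le_mul (abs_sign_cast_le_one k)
      (mul_le_mul_of_nonneg_right (bd1 k 3 (by norm_num)) (norm_nonneg _))
      (by positivity) zero_le_one) (le_of_eq (one_mul _))
  -- double (product) coefficient summabilities
  have hG1 : Summable fun p : ℤ × ℤ => ‖(mD 1 p.1 * a p.1) * (mD 3 p.2 * a p.2)‖ := by
    refine master2 (fun j l => (mD 1 j * a j) * (mD 3 l * a l)) fun j l => ?_
    have e1 : ‖(mD 1 j * a j) * (mD 3 l * a l)‖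
        = (|((j + l : ℤ):ℝ)| ^ 0 * |(j:ℝ)| ^ 1 * |(l:ℝ)| ^ 3) * (‖a j‖ * ‖a l‖) := by
      simp only [mL, mD, mH, neg_mul, norm_neg, norm_mul, norm_pow, Complex.norm_I,
        Complex.norm_intCast, Int.cast_abs, _root_.abs_abs, one_mul, pow_one]
      ring
    rw [e1]
    calc (|((j + l : ℤ):ℝ)| ^ 0 * |(j:ℝ)| ^ 1 * |(l:ℝ)| ^ 3) * (‖a j‖ * ‖a l‖)
        ≤ ((1 + |(j:ℝ)|) ^ 8 * (1 + |(l:ℝ)|) ^ 8) * (‖a j‖ * ‖a l‖) :=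
          mul_le_mul_of_nonneg_right
            (key_bd j l 0 1 3 (by norm_num) (by norm_num) (by norm_num)) (by positivity)
      _ = (1 + |(j:ℝ)|) ^ 8 * ‖a j‖ * ((1 + |(l:ℝ)|) ^ 8 * ‖a l‖) := by ring
  have hG2 : Summable fun p : ℤ × ℤ => ‖a p.1 * (mL 1 p.2 * (mD 2 p.2 * a p.2))‖ := by
    refine master2 (fun j l => a j * (mL 1 l * (mD 2 l * a l))) fun j l => ?_
    have e1 : ‖a j * (mL 1 l * (mD 2 l * a l))‖
        = (|((j + l : ℤ):ℝ)| ^ 0 * |(j:ℝ)| ^ 0 * |(l:ℝ)| ^ 3) * (‖a j‖ * ‖a l‖) := by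
      simp only [mL, mD, mH, neg_mul, norm_neg, norm_mul, norm_pow, Complex.norm_I,
        Complex.norm_intCast, Int.cast_abs, _root_.abs_abs, one_mul, pow_one]
      ring
    rw [e1]
    calc (|((j + l : ℤ):ℝ)| ^ 0 * |(j:ℝ)| ^ 0 * |(l:ℝ)| ^ 3) * (‖a j‖ * ‖a l‖)
        ≤ ((1 + |(j:ℝ)|) ^ 8 * (1 + |(l:ℝ)|) ^ 8) * (‖a j‖ * ‖a l‖) :=
          mul_le_mul_of_nonneg_right
            (key_bd j l 0 0 3 (by norm_num) (by norm_num) (by norm_num)) (by positivity)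
      _ = (1 + |(j:ℝ)|) ^ 8 * ‖a j‖ * ((1 + |(l:ℝ)|) ^ 8 * ‖a l‖) := by ring
  have hG2m : Summable fun p : ℤ × ℤ => ‖mL 1 (p.1 + p.2) * (a p.1 * (mL 1 p.2 * (mD 2 p.2 * a p.2)))‖ := by
    refine master2 (fun j l => mL 1 (j + l) * (a j * (mL 1 l * (mD 2 l * a l)))) fun j l => ?_
    have e1 : ‖mL 1 (j + l) * (a j * (mL 1 l * (mD 2 l * a l)))‖
        = (|((j + l : ℤ):ℝ)| ^ 1 * |(j:ℝ)| ^ 0 * |(l:ℝ)| ^ 3) * (‖a j‖ * ‖a l‖) := by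
      simp only [mL, mD, mH, neg_mul, norm_neg, norm_mul, norm_pow, Complex.norm_I,
        Complex.norm_intCast, Int.cast_abs, _root_.abs_abs, one_mul, pow_one]
      ring
    rw [e1]
    calc (|((j + l : ℤ):ℝ)| ^ 1 * |(j:ℝ)| ^ 0 * |(l:ℝ)| ^ 3) * (‖a j‖ * ‖a l‖)
        ≤ ((1 + |(j:ℝ)|) ^ 8 * (1 + |(l:ℝ)|) ^ 8) * (‖a j‖ * ‖a l‖) :=
          mul_le_mul_of_nonneg_right
            (key_bd j l 1 0 3 (by norm_num) (by norm_num) (by norm_num)) (by positivity)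
      _ = (1 + |(j:ℝ)|) ^ 8 * ‖a j‖ * ((1 + |(l:ℝ)|) ^ 8 * ‖a l‖) := by ring
  have hG3 : Summable fun p : ℤ × ℤ => ‖a p.1 * (mL 1 p.2 * (mL 1 p.2 * (mD 2 p.2 * a p.2)))‖ := by
    refine master2 (fun j l => a j * (mL 1 l * (mL 1 l * (mD 2 l * a l)))) fun j l => ?_
    have e1 : ‖a j * (mL 1 l * (mL 1 l * (mD 2 l * a l)))‖
        = (|((j + l : ℤ):ℝ)| ^ 0 * |(j:ℝ)| ^ 0 * |(l:ℝ)| ^ 4) * (‖a j‖ * ‖a l‖) := by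
      simp only [mL, mD, mH, neg_mul, norm_neg, norm_mul, norm_pow, Complex.norm_I,
        Complex.norm_intCast, Int.cast_abs, _root_.abs_abs, one_mul, pow_one]
      ring
    rw [e1]
    calc (|((j + l : ℤ):ℝ)| ^ 0 * |(j:ℝ)| ^ 0 * |(l:ℝ)| ^ 4) * (‖a j‖ * ‖a l‖)
        ≤ ((1 + |(j:ℝ)|) ^ 8 * (1 + |(l:ℝ)|) ^ 8) * (‖a j‖ * ‖a l‖) :=
          mul_le_mul_of_nonneg_right
            (key_bd j l 0 0 4 (by norm_num) (by norm_num) (by norm_num)) (by positivity)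
      _ = (1 + |(j:ℝ)|) ^ 8 * ‖a j‖ * ((1 + |(l:ℝ)|) ^ 8 * ‖a l‖) := by ring
  have hG4 : Summable fun p : ℤ × ℤ => ‖a p.1 * (mL 3 p.2 * a p.2)‖ := by
    refine master2 (fun j l => a j * (mL 3 l * a l)) fun j l => ?_
    have e1 : ‖a j * (mL 3 l * a l)‖
        = (|((j + l : ℤ):ℝ)| ^ 0 * |(j:ℝ)| ^ 0 * |(l:ℝ)| ^ 3) * (‖a j‖ * ‖a l‖) := by
      simp only [mL, mD, mH, neg_mul, norm_neg, norm_mul, norm_pow, Complex.norm_I,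
        Complex.norm_intCast, Int.cast_abs, _root_.abs_abs, one_mul, pow_one]
      ring
    rw [e1]
    calc (|((j + l : ℤ):ℝ)| ^ 0 * |(j:ℝ)| ^ 0 * |(l:ℝ)| ^ 3) * (‖a j‖ * ‖a l‖)
        ≤ ((1 + |(j:ℝ)|) ^ 8 * (1 + |(l:ℝ)|) ^ 8) * (‖a j‖ * ‖a l‖) :=
          mul_le_mul_of_nonneg_right
            (key_bd j l 0 0 3 (by norm_num) (by norm_num) (by norm_num)) (by positivity)
      _ = (1 + |(j:ℝ)|) ^ 8 * ‖a j‖ * ((1 + |(l:ℝ)|) ^ 8 * ‖a l‖) := by ring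
  have hG4m : Summable fun p : ℤ × ℤ => ‖mL 1 (p.1 + p.2) * (a p.1 * (mL 3 p.2 * a p.2))‖ := by
    refine master2 (fun j l => mL 1 (j + l) * (a j * (mL 3 l * a l))) fun j l => ?_
    have e1 : ‖mL 1 (j + l) * (a j * (mL 3 l * a l))‖
        = (|((j + l : ℤ):ℝ)| ^ 1 * |(j:ℝ)| ^ 0 * |(l:ℝ)| ^ 3) * (‖a j‖ * ‖a l‖) := by
      simp only [mL, mD, mH, neg_mul, norm_neg, norm_mul, norm_pow, Complex.norm_I,
        Complex.norm_intCast, Int.cast_abs, _root_.abs_abs, one_mul, pow_one]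
      ring
    rw [e1]
    calc (|((j + l : ℤ):ℝ)| ^ 1 * |(j:ℝ)| ^ 0 * |(l:ℝ)| ^ 3) * (‖a j‖ * ‖a l‖)
        ≤ ((1 + |(j:ℝ)|) ^ 8 * (1 + |(l:ℝ)|) ^ 8) * (‖a j‖ * ‖a l‖) :=
          mul_le_mul_of_nonneg_right
            (key_bd j l 1 0 3 (by norm_num) (by norm_num) (by norm_num)) (by positivity)
      _ = (1 + |(j:ℝ)|) ^ 8 * ‖a j‖ * ((1 + |(l:ℝ)|) ^ 8 * ‖a l‖) := by ring
  have hG5 : Summable fun p : ℤ × ℤ => ‖a p.1 * (mD 3 p.2 * a p.2)‖ := by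
    refine master2 (fun j l => a j * (mD 3 l * a l)) fun j l => ?_
    have e1 : ‖a j * (mD 3 l * a l)‖
        = (|((j + l : ℤ):ℝ)| ^ 0 * |(j:ℝ)| ^ 0 * |(l:ℝ)| ^ 3) * (‖a j‖ * ‖a l‖) := by
      simp only [mL, mD, mH, neg_mul, norm_neg, norm_mul, norm_pow, Complex.norm_I,
        Complex.norm_intCast, Int.cast_abs, _root_.abs_abs, one_mul, pow_one]
      ring
    rw [e1]
    calc (|((j + l : ℤ):ℝ)| ^ 0 * |(j:ℝ)| ^ 0 * |(l:ℝ)| ^ 3) * (‖a j‖ * ‖a l‖)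
        ≤ ((1 + |(j:ℝ)|) ^ 8 * (1 + |(l:ℝ)|) ^ 8) * (‖a j‖ * ‖a l‖) :=
          mul_le_mul_of_nonneg_right
            (key_bd j l 0 0 3 (by norm_num) (by norm_num) (by norm_num)) (by positivity)
      _ = (1 + |(j:ℝ)|) ^ 8 * ‖a j‖ * ((1 + |(l:ℝ)|) ^ 8 * ‖a l‖) := by ring
  have hG5m : Summable fun p : ℤ × ℤ => ‖mD 1 (p.1 + p.2) * (a p.1 * (mD 3 p.2 * a p.2))‖ := by
    refine master2 (fun j l => mD 1 (j + l) * (a j * (mD 3 l * a l))) fun j l => ?_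
    have e1 : ‖mD 1 (j + l) * (a j * (mD 3 l * a l))‖
        = (|((j + l : ℤ):ℝ)| ^ 1 * |(j:ℝ)| ^ 0 * |(l:ℝ)| ^ 3) * (‖a j‖ * ‖a l‖) := by
      simp only [mL, mD, mH, neg_mul, norm_neg, norm_mul, norm_pow, Complex.norm_I,
        Complex.norm_intCast, Int.cast_abs, _root_.abs_abs, one_mul, pow_one]
      ring
    rw [e1]
    calc (|((j + l : ℤ):ℝ)| ^ 1 * |(j:ℝ)| ^ 0 * |(l:ℝ)| ^ 3) * (‖a j‖ * ‖a l‖)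
        ≤ ((1 + |(j:ℝ)|) ^ 8 * (1 + |(l:ℝ)|) ^ 8) * (‖a j‖ * ‖a l‖) :=
          mul_le_mul_of_nonneg_right
            (key_bd j l 1 0 3 (by norm_num) (by norm_num) (by norm_num)) (by positivity)
      _ = (1 + |(j:ℝ)|) ^ 8 * ‖a j‖ * ((1 + |(l:ℝ)|) ^ 8 * ‖a l‖) := by ring
  -- bounds for the Hilbert-transform pieces
  have hb9 : ∀ j l : ℤ, ‖mH (j + l) * (a j * (mL 3 l * a l))‖
      ≤ |(l:ℝ)| ^ 3 * (‖a j‖ * ‖a l‖) := by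
    intro j l
    have e1 : ‖mH (j + l) * (a j * (mL 3 l * a l))‖
        = |(((j + l).sign : ℤ) : ℝ)| * (|(l:ℝ)| ^ 3 * (‖a j‖ * ‖a l‖)) := by
      simp only [mL, mD, mH, neg_mul, norm_neg, norm_mul, norm_pow, Complex.norm_I,
        Complex.norm_intCast, Int.cast_abs, _root_.abs_abs, one_mul, pow_one]
      ring
    rw [e1]
    refine le_trans (mul_le_mul_of_nonneg_right (abs_sign_cast_le_one (j + l)) (by positivity))
      (le_of_eq (one_mul _))
  have hb10 : ∀ j l : ℤ, ‖a j * (mH l * (mL 3 l * a l))‖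
      ≤ |(l:ℝ)| ^ 3 * (‖a j‖ * ‖a l‖) := by
    intro j l
    have e1 : ‖a j * (mH l * (mL 3 l * a l))‖
        = |((l.sign : ℤ) : ℝ)| * (|(l:ℝ)| ^ 3 * (‖a j‖ * ‖a l‖)) := by
      simp only [mL, mD, mH, neg_mul, norm_neg, norm_mul, norm_pow, Complex.norm_I,
        Complex.norm_intCast, Int.cast_abs, _root_.abs_abs, one_mul, pow_one]
      ring
    rw [e1]
    refine le_trans (mul_le_mul_of_nonneg_right (abs_sign_cast_le_one l) (by positivity))
      (le_of_eq (one_mul _))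
  have hb11 : ∀ j l : ℤ, ‖mH (j + l) * (a j * (mL 3 l * a l)) - a j * (mH l * (mL 3 l * a l))‖
      ≤ 2 * |(l:ℝ)| ^ 3 * (‖a j‖ * ‖a l‖) := by
    intro j l
    refine le_trans (norm_sub_le _ _) ?_
    have := add_le_add (hb9 j l) (hb10 j l)
    linarith
  have hG9 : Summable fun p : ℤ × ℤ => ‖mH (p.1 + p.2) * (a p.1 * (mL 3 p.2 * a p.2))‖ := by
    refine master2 (fun j l => mH (j + l) * (a j * (mL 3 l * a l))) fun j l => ?_
    refine le_trans (hb9 j l) ?_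
    calc |(l:ℝ)| ^ 3 * (‖a j‖ * ‖a l‖)
        = (|((j + l : ℤ):ℝ)| ^ 0 * |(j:ℝ)| ^ 0 * |(l:ℝ)| ^ 3) * (‖a j‖ * ‖a l‖) := by ring
      _ ≤ ((1 + |(j:ℝ)|) ^ 8 * (1 + |(l:ℝ)|) ^ 8) * (‖a j‖ * ‖a l‖) :=
          mul_le_mul_of_nonneg_right
            (key_bd j l 0 0 3 (by norm_num) (by norm_num) (by norm_num)) (by positivity)
      _ = (1 + |(j:ℝ)|) ^ 8 * ‖a j‖ * ((1 + |(l:ℝ)|) ^ 8 * ‖a l‖) := by ring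
  have hG10 : Summable fun p : ℤ × ℤ => ‖a p.1 * (mH p.2 * (mL 3 p.2 * a p.2))‖ := by
    refine master2 (fun j l => a j * (mH l * (mL 3 l * a l))) fun j l => ?_
    refine le_trans (hb10 j l) ?_
    calc |(l:ℝ)| ^ 3 * (‖a j‖ * ‖a l‖)
        = (|((j + l : ℤ):ℝ)| ^ 0 * |(j:ℝ)| ^ 0 * |(l:ℝ)| ^ 3) * (‖a j‖ * ‖a l‖) := by ring
      _ ≤ ((1 + |(j:ℝ)|) ^ 8 * (1 + |(l:ℝ)|) ^ 8) * (‖a j‖ * ‖a l‖) :=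
          mul_le_mul_of_nonneg_right
            (key_bd j l 0 0 3 (by norm_num) (by norm_num) (by norm_num)) (by positivity)
      _ = (1 + |(j:ℝ)|) ^ 8 * ‖a j‖ * ((1 + |(l:ℝ)|) ^ 8 * ‖a l‖) := by ring
  have hG11 : Summable fun p : ℤ × ℤ =>
      ‖mH (p.1 + p.2) * (a p.1 * (mL 3 p.2 * a p.2))
        - a p.1 * (mH p.2 * (mL 3 p.2 * a p.2))‖ := by
    refine master2
      (fun j l => mH (j + l) * (a j * (mL 3 l * a l)) - a j * (mH l * (mL 3 l * a l)))
      fun j l => ?_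
    refine le_trans (hb11 j l) ?_
    calc 2 * |(l:ℝ)| ^ 3 * (‖a j‖ * ‖a l‖)
        = (|((j + l : ℤ):ℝ)| ^ 0 * (2 * |(l:ℝ)| ^ 3)) * (‖a j‖ * ‖a l‖) := by ring
      _ ≤ ((1 + |(j:ℝ)|) ^ 8 * (1 + |(l:ℝ)|) ^ 8) * (‖a j‖ * ‖a l‖) :=
          mul_le_mul_of_nonneg_right (key_bd2 j l 0 (by norm_num)) (by positivity)
      _ = (1 + |(j:ℝ)|) ^ 8 * ‖a j‖ * ((1 + |(l:ℝ)|) ^ 8 * ‖a l‖) := by ring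
  have hG11m : Summable fun p : ℤ × ℤ =>
      ‖mD 1 (p.1 + p.2) * (mH (p.1 + p.2) * (a p.1 * (mL 3 p.2 * a p.2))
        - a p.1 * (mH p.2 * (mL 3 p.2 * a p.2)))‖ := by
    refine master2 (fun j l => mD 1 (j + l)
      * (mH (j + l) * (a j * (mL 3 l * a l)) - a j * (mH l * (mL 3 l * a l)))) fun j l => ?_
    have e1 : ‖mD 1 (j + l) * (mH (j + l) * (a j * (mL 3 l * a l))
        - a j * (mH l * (mL 3 l * a l)))‖
        = |((j + l : ℤ):ℝ)| * ‖mH (j + l) * (a j * (mL 3 l * a l))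
            - a j * (mH l * (mL 3 l * a l))‖ := by
      rw [norm_mul]
      congr 1
      simp only [mD, pow_one, norm_mul, Complex.norm_I,
        Complex.norm_intCast, one_mul]
    rw [e1]
    calc |((j + l : ℤ):ℝ)| * ‖mH (j + l) * (a j * (mL 3 l * a l))
            - a j * (mH l * (mL 3 l * a l))‖
        ≤ |((j + l : ℤ):ℝ)| * (2 * |(l:ℝ)| ^ 3 * (‖a j‖ * ‖a l‖)) :=
          mul_le_mul_of_nonneg_left (hb11 j l) (abs_nonneg _)
      _ = (|((j + l : ℤ):ℝ)| ^ 1 * (2 * |(l:ℝ)| ^ 3)) * (‖a j‖ * ‖a l‖) := by ring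
      _ ≤ ((1 + |(j:ℝ)|) ^ 8 * (1 + |(l:ℝ)|) ^ 8) * (‖a j‖ * ‖a l‖) :=
          mul_le_mul_of_nonneg_right (key_bd2 j l 1 (by norm_num)) (by positivity)
      _ = (1 + |(j:ℝ)|) ^ 8 * ‖a j‖ * ((1 + |(l:ℝ)|) ^ 8 * ‖a l‖) := by ring
  -- canonical forms of the single-multiplier functions
  have hDn2 : Dn 2 f = fun y => ∑' j : ℤ, (mD 2 j * a j) * fourier j y := rfl
  have hL1D2 : Lamn 1 (Dn 2 f) = fun y => ∑' k : ℤ, (mL 1 k * (mD 2 k * a k)) * fourier k y := by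
    funext y
    rw [hDn2]
    exact apply_single (mL 1) hsD2i y
  have hL1L1D2 : Lamn 1 (Lamn 1 (Dn 2 f))
      = fun y => ∑' k : ℤ, (mL 1 k * (mL 1 k * (mD 2 k * a k))) * fourier k y := by
    funext y
    rw [hL1D2]
    exact apply_single (mL 1) hsL1D2 y
  have hL3 : Lamn 3 f = fun y => ∑' k : ℤ, (mL 3 k * a k) * fourier k y := rfl
  have hHL3 : Hop (Lamn 3 f)
      = fun y => ∑' k : ℤ, (mH k * (mL 3 k * a k)) * fourier k y := by
    funext y
    rw [hL3]
    exact apply_single mH hsL3 y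
  -- canonical forms of the products
  have hFP2 : (fun y => f y * Lamn 1 (Dn 2 f) y)
      = fun y => ∑' p : ℤ × ℤ, (a p.1 * (mL 1 p.2 * (mD 2 p.2 * a p.2)))
          * fourier (p.1 + p.2) y := by
    funext y
    rw [hrep y, hL1D2]
    exact prod_tsum hs0 hsL1D2 y
  have hFP4 : (fun y => f y * Lamn 3 f y)
      = fun y => ∑' p : ℤ × ℤ, (a p.1 * (mL 3 p.2 * a p.2)) * fourier (p.1 + p.2) y := by
    funext y
    rw [hrep y, hL3]
    exact prod_tsum hs0 hsL3 y
  have hFP4' : (fun z => f z * Lamn 3 f z)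
      = fun y => ∑' p : ℤ × ℤ, (a p.1 * (mL 3 p.2 * a p.2)) * fourier (p.1 + p.2) y := hFP4
  have hFP5 : (fun y => f y * Dn 3 f y)
      = fun y => ∑' p : ℤ × ℤ, (a p.1 * (mD 3 p.2 * a p.2)) * fourier (p.1 + p.2) y := by
    funext y
    rw [hrep y]
    exact prod_tsum hs0 hsD3 y
  have hFP10 : (fun y => f y * Hop (Lamn 3 f) y)
      = fun y => ∑' p : ℤ × ℤ, (a p.1 * (mH p.2 * (mL 3 p.2 * a p.2)))
          * fourier (p.1 + p.2) y := by
    funext y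
    rw [hrep y, hHL3]
    exact prod_tsum hs0 hsHL3 y
  have hFP10y : ∀ y, f y * Hop (Lamn 3 f) y
      = ∑' p : ℤ × ℤ, (a p.1 * (mH p.2 * (mL 3 p.2 * a p.2))) * fourier (p.1 + p.2) y := by
    intro y
    rw [hrep y, hHL3]
    exact prod_tsum hs0 hsHL3 y
  -- Hop of the product, and the commutator integrand
  have hHop4 : Hop (fun z => f z * Lamn 3 f z)
      = fun y => ∑' p : ℤ × ℤ, (mH (p.1 + p.2) * (a p.1 * (mL 3 p.2 * a p.2)))
          * fourier (p.1 + p.2) y := by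
    funext y
    rw [hFP4']
    exact apply_double mH (G := fun j l => a j * (mL 3 l * a l)) hG4 hG9 y
  have hDiff : (fun y => Hop (fun z => f z * Lamn 3 f z) y - f y * Hop (Lamn 3 f) y)
      = fun y => ∑' p : ℤ × ℤ, (mH (p.1 + p.2) * (a p.1 * (mL 3 p.2 * a p.2))
          - a p.1 * (mH p.2 * (mL 3 p.2 * a p.2))) * fourier (p.1 + p.2) y := by
    funext y
    calc Hop (fun z => f z * Lamn 3 f z) y - f y * Hop (Lamn 3 f) y
        = (∑' p : ℤ × ℤ, (mH (p.1 + p.2) * (a p.1 * (mL 3 p.2 * a p.2)))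
              * fourier (p.1 + p.2) y)
          - ∑' p : ℤ × ℤ, (a p.1 * (mH p.2 * (mL 3 p.2 * a p.2)))
              * fourier (p.1 + p.2) y := by
          rw [hHop4, hFP10y y]
      _ = ∑' p : ℤ × ℤ, ((mH (p.1 + p.2) * (a p.1 * (mL 3 p.2 * a p.2)))
              * fourier (p.1 + p.2) y
            - (a p.1 * (mH p.2 * (mL 3 p.2 * a p.2))) * fourier (p.1 + p.2) y) :=
          (Summable.tsum_sub
            (summable_double (G := fun j l => mH (j + l) * (a j * (mL 3 l * a l))) hG9 y)
            (summable_double (G := fun j l => a j * (mH l * (mL 3 l * a l))) hG10 y)).symm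
      _ = ∑' p : ℤ × ℤ, (mH (p.1 + p.2) * (a p.1 * (mL 3 p.2 * a p.2))
            - a p.1 * (mH p.2 * (mL 3 p.2 * a p.2))) * fourier (p.1 + p.2) y :=
          tsum_congr fun p => (sub_mul _ _ _).symm
  -- expressing each term of the theorem as a double sum
  have A1 : ∀ x, Dn 1 f x * Dn 3 f x
      = ∑' p : ℤ × ℤ, ((mD 1 p.1 * a p.1) * (mD 3 p.2 * a p.2)) * fourier (p.1 + p.2) x := by
    intro x
    exact prod_tsum hsD1 hsD3 x
  have A2 : ∀ x, Lamn 1 (fun y => f y * Lamn 1 (Dn 2 f) y) x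
      = ∑' p : ℤ × ℤ, (mL 1 (p.1 + p.2) * (a p.1 * (mL 1 p.2 * (mD 2 p.2 * a p.2))))
          * fourier (p.1 + p.2) x := by
    intro x
    rw [hFP2]
    exact apply_double (mL 1) (G := fun j l => a j * (mL 1 l * (mD 2 l * a l))) hG2 hG2m x
  have A3 : ∀ x, f x * Lamn 1 (Lamn 1 (Dn 2 f)) x
      = ∑' p : ℤ × ℤ, (a p.1 * (mL 1 p.2 * (mL 1 p.2 * (mD 2 p.2 * a p.2))))
          * fourier (p.1 + p.2) x := by
    intro x
    rw [hrep x, hL1L1D2]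
    exact prod_tsum hs0 hsL1L1D2 x
  have A4 : ∀ x, Lamn 1 (fun y => f y * Lamn 3 f y) x
      = ∑' p : ℤ × ℤ, (mL 1 (p.1 + p.2) * (a p.1 * (mL 3 p.2 * a p.2)))
          * fourier (p.1 + p.2) x := by
    intro x
    rw [hFP4]
    exact apply_double (mL 1) (G := fun j l => a j * (mL 3 l * a l)) hG4 hG4m x
  have A5 : ∀ x, Dn 1 (fun y => f y * Dn 3 f y) x
      = ∑' p : ℤ × ℤ, (mD 1 (p.1 + p.2) * (a p.1 * (mD 3 p.2 * a p.2)))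
          * fourier (p.1 + p.2) x := by
    intro x
    rw [hFP5]
    exact apply_double (mD 1) (G := fun j l => a j * (mD 3 l * a l)) hG5 hG5m x
  have A6 : ∀ x, Dn 1 (fun y => Hop (fun z => f z * Lamn 3 f z) y - f y * Hop (Lamn 3 f) y) x
      = ∑' p : ℤ × ℤ, (mD 1 (p.1 + p.2) * (mH (p.1 + p.2) * (a p.1 * (mL 3 p.2 * a p.2))
          - a p.1 * (mH p.2 * (mL 3 p.2 * a p.2)))) * fourier (p.1 + p.2) x := by
    intro x
    rw [hDiff]
    exact apply_double (mD 1)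
      (G := fun j l => mH (j + l) * (a j * (mL 3 l * a l)) - a j * (mH l * (mL 3 l * a l)))
      hG11 hG11m x
  -- final assembly
  intro x
  have hS1 : Summable fun p : ℤ × ℤ =>
      ((mD 1 p.1 * a p.1) * (mD 3 p.2 * a p.2)) * fourier (p.1 + p.2) x :=
    summable_double (G := fun j l => (mD 1 j * a j) * (mD 3 l * a l)) hG1 x
  have hS2 : Summable fun p : ℤ × ℤ =>
      (mL 1 (p.1 + p.2) * (a p.1 * (mL 1 p.2 * (mD 2 p.2 * a p.2)))) * fourier (p.1 + p.2) x :=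
    summable_double (G := fun j l => mL 1 (j + l) * (a j * (mL 1 l * (mD 2 l * a l)))) hG2m x
  have hS3 : Summable fun p : ℤ × ℤ =>
      (a p.1 * (mL 1 p.2 * (mL 1 p.2 * (mD 2 p.2 * a p.2)))) * fourier (p.1 + p.2) x :=
    summable_double (G := fun j l => a j * (mL 1 l * (mL 1 l * (mD 2 l * a l)))) hG3 x
  have hS4 : Summable fun p : ℤ × ℤ =>
      (mL 1 (p.1 + p.2) * (a p.1 * (mL 3 p.2 * a p.2))) * fourier (p.1 + p.2) x :=
    summable_double (G := fun j l => mL 1 (j + l) * (a j * (mL 3 l * a l))) hG4m x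
  have hS5 : Summable fun p : ℤ × ℤ =>
      (mD 1 (p.1 + p.2) * (a p.1 * (mD 3 p.2 * a p.2))) * fourier (p.1 + p.2) x :=
    summable_double (G := fun j l => mD 1 (j + l) * (a j * (mD 3 l * a l))) hG5m x
  constructor
  · rw [A1 x, A2 x, A3 x, A4 x, A5 x, ← Summable.tsum_sub hS2 hS3, ← tsum_neg,
      ← Summable.tsum_sub hS1.neg (hS2.sub hS3), ← Summable.tsum_sub hS4 hS5]
    exact tsum_congr fun p => by
      linear_combination (fourier (p.1 + p.2) x : ℂ) * scalar1 a p.1 p.2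
  · rw [A4 x, A5 x, A6 x, ← Summable.tsum_sub hS4 hS5]
    exact tsum_congr fun p => by
      linear_combination (fourier (p.1 + p.2) x : ℂ) * scalar2 a p.1 p.2


end
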